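/- Let Q = ⟨a, x, y | a⁻¹xa = y, a⁻¹ya = x⟩ and let n be an odd positive integer. Then the quotient Q/⟪aⁿ⟫ of Q by the normal closure of aⁿ is isomorphic to ℤ/nℤ × ℤ. In particular, Q/⟪aⁿ⟫ is abelian. -/

import Mathlib

/-!
Conjugation by `a` swaps `x` and `y`, so conjugation by `a²` fixes both and conjugation by an odd
power `aⁿ` still swaps them. Once `aⁿ = 1`, this forces `x = y`, hence `a` commutes with `x`, and
the quotient is the abelian group generated by `a` of order `n` and `x` of infinite order. The
isomorphism with `ℤ/nℤ × ℤ` sends `a ↦ (1, 0)` and `x, y ↦ (0, 1)`; its inverse is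
`(m, k) ↦ aᵐ xᵏ`.
-/

/-- Relators of `Q = ⟨a, x, y | a⁻¹xa = y, a⁻¹ya = x⟩`, with `a, x, y` the generators
indexed by `0, 1, 2`. -/
def rels13 : Set (FreeGroup (Fin 3)) :=
  {(FreeGroup.of 0)⁻¹ * FreeGroup.of 1 * FreeGroup.of 0 * (FreeGroup.of 2)⁻¹,
   (FreeGroup.of 0)⁻¹ * FreeGroup.of 2 * FreeGroup.of 0 * (FreeGroup.of 1)⁻¹}

section Group

variable {G : Type*} [Group G]

theorem SemiconjBy.pow_odd_of_swap {a x y : G} (hxy : SemiconjBy a x y) (hyx : SemiconjBy a y x)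
    {n : ℕ} (hn : Odd n) : SemiconjBy (a ^ n) x y := by
  obtain ⟨k, rfl⟩ := hn
  have hsq : Commute (a ^ 2) x := by
    rw [sq]
    exact hyx.mul_left hxy
  rw [pow_succ', pow_mul]
  exact hxy.mul_left (hsq.pow_left k)

theorem SemiconjBy.eq_of_swap_of_pow_odd_eq_one {a x y : G} (hxy : SemiconjBy a x y)
    (hyx : SemiconjBy a y x) {n : ℕ} (hn : Odd n) (ha : a ^ n = 1) : x = y := by
  simpa [SemiconjBy, ha] using hxy.pow_odd_of_swap hyx hn

def zmodPowersHom (n : ℕ) (g : G) (hg : g ^ n = 1) : Multiplicative (ZMod n) →* G :=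
  AddMonoidHom.toMultiplicativeLeft <|
    ZMod.lift n ⟨zmultiplesHom (Additive G) (Additive.ofMul g), by simp [← ofMul_pow, hg]⟩

@[simp]
theorem zmodPowersHom_ofAdd_intCast {n : ℕ} {g : G} (hg : g ^ n = 1) (m : ℤ) :
    zmodPowersHom n g hg (Multiplicative.ofAdd (m : ZMod n)) = g ^ m := by
  simp [zmodPowersHom, ← ofMul_zpow]

@[simp]
theorem zmodPowersHom_ofAdd_one {n : ℕ} {g : G} (hg : g ^ n = 1) :
    zmodPowersHom n g hg (Multiplicative.ofAdd 1) = g := by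
  simpa using zmodPowersHom_ofAdd_intCast hg 1

theorem Commute.zmodPowersHom_left {n : ℕ} {g k : G} (hg : g ^ n = 1) (h : Commute g k)
    (u : Multiplicative (ZMod n)) : Commute (zmodPowersHom n g hg u) k := by
  obtain ⟨m, hm⟩ := ZMod.intCast_surjective (Multiplicative.toAdd u)
  rw [← ofAdd_toAdd u, ← hm, zmodPowersHom_ofAdd_intCast]
  exact h.zpow_left m

end Group

namespace SwapGroup

abbrev a : PresentedGroup rels13 := .of 0
abbrev x : PresentedGroup rels13 := .of 1
abbrev y : PresentedGroup rels13 := .of 2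

theorem semiconjBy_a_x_y : SemiconjBy a x y := by
  have h : a⁻¹ * y * a * x⁻¹ = 1 := PresentedGroup.one_of_mem (Or.inr rfl)
  rw [mul_inv_eq_one, mul_assoc, inv_mul_eq_iff_eq_mul] at h
  exact h.symm

theorem semiconjBy_a_y_x : SemiconjBy a y x := by
  have h : a⁻¹ * x * a * y⁻¹ = 1 := PresentedGroup.one_of_mem (Or.inl rfl)
  rw [mul_inv_eq_one, mul_assoc, inv_mul_eq_iff_eq_mul] at h
  exact h.symm

abbrev quotientPow (n : ℕ) :=
  PresentedGroup rels13 ⧸ Subgroup.normalClosure ({a ^ n} : Set (PresentedGroup rels13))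

variable {n : ℕ}

theorem mk_a_pow : (a : quotientPow n) ^ n = 1 := by
  rw [← QuotientGroup.mk_pow, QuotientGroup.eq_one_iff]
  exact Subgroup.subset_normalClosure rfl

theorem semiconjBy_mk_a_mk_x_mk_y : SemiconjBy (a : quotientPow n) x y :=
  semiconjBy_a_x_y.map (QuotientGroup.mk' _)

theorem semiconjBy_mk_a_mk_y_mk_x : SemiconjBy (a : quotientPow n) y x :=
  semiconjBy_a_y_x.map (QuotientGroup.mk' _)

theorem mk_x_eq_mk_y (hn : Odd n) : (x : quotientPow n) = y :=
  semiconjBy_mk_a_mk_x_mk_y.eq_of_swap_of_pow_odd_eq_one semiconjBy_mk_a_mk_y_mk_x hn mk_a_pow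

theorem commute_mk_a_mk_x (hn : Odd n) : Commute (a : quotientPow n) x := by
  have h := semiconjBy_mk_a_mk_x_mk_y (n := n)
  rwa [← mk_x_eq_mk_y hn] at h

def genImage (n : ℕ) : Fin 3 → Multiplicative (ZMod n) × Multiplicative ℤ :=
  ![(.ofAdd 1, 1), (1, .ofAdd 1), (1, .ofAdd 1)]

theorem genImage_rels (n : ℕ) : ∀ r ∈ rels13, FreeGroup.lift (genImage n) r = 1 := by
  rintro r (rfl | rfl) <;> simp [genImage, Prod.ext_iff]

def toZModProd (n : ℕ) : quotientPow n →* Multiplicative (ZMod n) × Multiplicative ℤ :=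
  QuotientGroup.lift _ (PresentedGroup.toGroup (genImage_rels n)) <| by
    refine Subgroup.normalClosure_le_normal (Set.singleton_subset_iff.2 ?_)
    simp [genImage, Prod.ext_iff, ← ofAdd_nsmul]

@[simp]
theorem toZModProd_mk_of (i : Fin 3) :
    toZModProd n (PresentedGroup.of i : PresentedGroup rels13) = genImage n i :=
  PresentedGroup.toGroup.of (genImage_rels n)

def ofZModProd (hn : Odd n) : Multiplicative (ZMod n) × Multiplicative ℤ →* quotientPow n :=
  (zmodPowersHom n (a : quotientPow n) mk_a_pow).noncommCoprod (zpowersHom _ (x : quotientPow n))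
    fun u v => by
      rw [zpowersHom_apply]
      exact ((commute_mk_a_mk_x hn).zpow_right _).zmodPowersHom_left mk_a_pow u

theorem ofZModProd_comp_toZModProd (hn : Odd n) :
    (ofZModProd hn).comp (toZModProd n) = MonoidHom.id _ := by
  refine QuotientGroup.monoidHom_ext _ (PresentedGroup.ext fun i => ?_)
  fin_cases i <;> simp [ofZModProd, genImage, mk_x_eq_mk_y hn]

theorem toZModProd_comp_ofZModProd (hn : Odd n) :
    (toZModProd n).comp (ofZModProd hn) = MonoidHom.id _ := by
  ext ⟨u, v⟩ : 1
  obtain ⟨m, hm⟩ := ZMod.intCast_surjective (Multiplicative.toAdd u)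
  rw [← ofAdd_toAdd u, ← ofAdd_toAdd v, ← hm]
  simp [ofZModProd, genImage, ← ofAdd_zsmul]

def quotientPowEquiv (hn : Odd n) :
    quotientPow n ≃* Multiplicative (ZMod n) × Multiplicative ℤ :=
  (toZModProd n).toMulEquiv (ofZModProd hn) (ofZModProd_comp_toZModProd hn)
    (toZModProd_comp_ofZModProd hn)

end SwapGroup

theorem stmt13_general (n : ℕ) (hodd : Odd n) :
    Nonempty ((PresentedGroup rels13 ⧸ Subgroup.normalClosure
        ({(PresentedGroup.of 0 : PresentedGroup rels13) ^ n} :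
          Set (PresentedGroup rels13))) ≃*
        Multiplicative (ZMod n) × Multiplicative ℤ) ∧
    ∀ u v : PresentedGroup rels13 ⧸ Subgroup.normalClosure
        ({(PresentedGroup.of 0 : PresentedGroup rels13) ^ n} :
          Set (PresentedGroup rels13)), u * v = v * u := by
  let e := SwapGroup.quotientPowEquiv hodd
  exact ⟨⟨e⟩, fun u v => e.injective (by rw [map_mul, map_mul, mul_comm])⟩

/-- For `Q = ⟨a, x, y | a⁻¹xa = y, a⁻¹ya = x⟩` and odd `n > 0`, the quotient `Q/⟪aⁿ⟫`
is isomorphic to `ℤ/nℤ × ℤ`; in particular it is abelian. -/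
theorem stmt13 (n : ℕ) (hodd : Odd n) (hpos : 0 < n) :
    Nonempty ((PresentedGroup rels13 ⧸ Subgroup.normalClosure
        ({(PresentedGroup.of 0 : PresentedGroup rels13) ^ n} :
          Set (PresentedGroup rels13))) ≃*
        Multiplicative (ZMod n) × Multiplicative ℤ) ∧
    ∀ u v : PresentedGroup rels13 ⧸ Subgroup.normalClosure
        ({(PresentedGroup.of 0 : PresentedGroup rels13) ^ n} :
          Set (PresentedGroup rels13)), u * v = v * u :=
  stmt13_general n hodd
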